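/- (Lemma 1) Let τ ≥ 1 be an integer and let η > 0 satisfy η ≤ 1/(4Lτ). Define the random point x̄⁺ = x̄ − (ητ/N)·Σ_{i=1}^N G_i. Then E[f(x̄⁺)] ≤ f(x̄) − (ητ/4)·‖∇f(x̄)‖² + (ηL²τ/N)·Σ_{i=1}^N ‖x̄ − x_i‖² + σ²η²τ²L/N. -/

import Mathlib

/-!
Write `S` for the average of the `G i`, `b` for the average of the `∇f_i(x_i)`, `ε = ητ` and
`g = ∇f(x̄)`, so that `x̄⁺ = x̄ - ε S`. By the mean value inequality, an `L`-Lipschitz gradient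
gives `f y ≤ f x̄ + ⟪g, y - x̄⟫ + L ‖y - x̄‖²` (the constant `L` rather than the sharp `L / 2` is
enough). Taking expectations at `y = x̄⁺` and using `E ‖S‖² = ‖b‖² + E ‖S - b‖²`, where
independence kills the cross terms so that `E ‖S - b‖² ≤ σ² / N`, yields
`E f(x̄⁺) ≤ f x̄ - ε ⟪g, b⟫ + L ε² ‖b‖² + L ε² σ² / N`. Polarisation and `L ε ≤ 1/4` bound
`-ε ⟪g, b⟫ + L ε² ‖b‖²` by `-(ε/4) ‖g‖² + (ε/2) ‖g - b‖²`, and Jensen's inequality with the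
Lipschitz gradients gives `‖g - b‖² ≤ (L² / N) ∑ ‖x̄ - x_i‖²`.
-/

open Finset MeasureTheory ProbabilityTheory RealInnerProductSpace

section NormSq

variable {E : Type*} [NormedAddCommGroup E] [InnerProductSpace ℝ E]

theorem norm_smul_sum_le {ι : Type*} (s : Finset ι) {c : ℝ} (hc : 0 ≤ c) (v : ι → E)
    {b : ι → ℝ} (hb : ∀ i ∈ s, ‖v i‖ ≤ b i) : ‖c • ∑ i ∈ s, v i‖ ≤ c * ∑ i ∈ s, b i := by
  rw [norm_smul, Real.norm_of_nonneg hc]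
  exact mul_le_mul_of_nonneg_left ((norm_sum_le _ _).trans (sum_le_sum hb)) hc

theorem norm_inv_card_smul_sum_sq_le {ι : Type*} (s : Finset ι) (v : ι → E) :
    ‖(#s : ℝ)⁻¹ • ∑ i ∈ s, v i‖ ^ 2 ≤ (#s : ℝ)⁻¹ * ∑ i ∈ s, ‖v i‖ ^ 2 := by
  have hsum : ‖∑ i ∈ s, v i‖ ^ 2 ≤ #s * ∑ i ∈ s, ‖v i‖ ^ 2 :=
    (pow_le_pow_left₀ (norm_nonneg _) (norm_sum_le _ _) 2).trans sq_sum_le_card_mul_sum_sq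
  calc ‖(#s : ℝ)⁻¹ • ∑ i ∈ s, v i‖ ^ 2 = (#s : ℝ)⁻¹ ^ 2 * ‖∑ i ∈ s, v i‖ ^ 2 := by
        rw [norm_smul, mul_pow, Real.norm_of_nonneg (by positivity)]
    _ ≤ (#s : ℝ)⁻¹ ^ 2 * (#s * ∑ i ∈ s, ‖v i‖ ^ 2) := by gcongr
    _ = (#s : ℝ)⁻¹ * ∑ i ∈ s, ‖v i‖ ^ 2 := by
        rcases eq_or_ne (#s : ℝ) 0 with h | h
        · simp [h]
        · field_simp

theorem neg_mul_inner_add_mul_sq_le {L ε : ℝ} (hε : 0 ≤ ε) (hLε : L * ε ≤ 1 / 4) (g b : E) :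
    -(ε * ⟪g, b⟫) + L * ε ^ 2 * ‖b‖ ^ 2 ≤ -(ε / 4 * ‖g‖ ^ 2) + ε / 2 * ‖g - b‖ ^ 2 := by
  have hpolar : 2 * ⟪g, b⟫ = ‖g‖ ^ 2 + ‖b‖ ^ 2 - ‖g - b‖ ^ 2 := by
    rw [norm_sub_sq_real]; ring
  have hquad := mul_le_mul_of_nonneg_right hLε (mul_nonneg hε (sq_nonneg ‖b‖))
  linear_combination hquad - ε / 2 * hpolar + 1 / 4 * mul_nonneg hε (sq_nonneg ‖g‖)
    + 1 / 4 * mul_nonneg hε (sq_nonneg ‖b‖)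

theorem norm_sum_sq_eq_sum_sum_inner {ι : Type*} [Fintype ι] (v : ι → E) :
    ‖∑ i, v i‖ ^ 2 = ∑ i, ∑ j, ⟪v i, v j⟫ := by
  simp_rw [← real_inner_self_eq_norm_sq, sum_inner, inner_sum]

theorem norm_sq_eq_norm_sq_add_inner_add_norm_sub_sq (s v : E) :
    ‖v‖ ^ 2 = ‖s‖ ^ 2 + 2 * ⟪s, v - s⟫ + ‖v - s‖ ^ 2 := by
  rw [← norm_add_sq_real, add_sub_cancel]

end NormSq

section Gradient

variable {E : Type*} [NormedAddCommGroup E] [InnerProductSpace ℝ E] [CompleteSpace E]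

theorem norm_fderiv_sub_innerSL (F : E → ℝ) (x g : E) :
    ‖fderiv ℝ F x - innerSL ℝ g‖ = ‖gradient F x - g‖ := by
  have hg : innerSL ℝ g = InnerProductSpace.toDual ℝ E g := by
    ext y; simp [InnerProductSpace.toDual_apply_apply]
  rw [hg, gradient, ← (InnerProductSpace.toDual ℝ E).norm_map, map_sub,
    LinearIsometryEquiv.apply_symm_apply]

theorem abs_sub_sub_inner_gradient_le {F : E → ℝ} {L : ℝ} (hF : Differentiable ℝ F) (hL : 0 ≤ L)
    (hLip : ∀ x y, ‖gradient F y - gradient F x‖ ≤ L * ‖y - x‖) (x y : E) :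
    |F y - F x - ⟪gradient F x, y - x⟫| ≤ L * ‖y - x‖ ^ 2 := by
  set g := gradient F x
  have hderiv : ∀ z, HasFDerivAt (fun z => F z - ⟪g, z⟫) (fderiv ℝ F z - innerSL ℝ g) z :=
    fun z => (hF z).hasFDerivAt.sub (innerSL ℝ g).hasFDerivAt
  have hbound : ∀ z ∈ segment ℝ x y, ‖fderiv ℝ F z - innerSL ℝ g‖ ≤ L * ‖y - x‖ := by
    intro z hz
    rw [norm_fderiv_sub_innerSL]
    obtain ⟨t, ⟨ht0, ht1⟩, rfl⟩ := (segment_eq_image' ℝ x y ▸ hz : _)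
    calc ‖gradient F (x + t • (y - x)) - g‖ ≤ L * ‖x + t • (y - x) - x‖ := hLip _ _
      _ = L * (t * ‖y - x‖) := by
        rw [add_sub_cancel_left, norm_smul, Real.norm_of_nonneg ht0]
      _ ≤ L * ‖y - x‖ := by
        gcongr; exact mul_le_of_le_one_left (norm_nonneg _) ht1
  have key := (convex_segment x y).norm_image_sub_le_of_norm_hasFDerivWithin_le
    (fun z _ => (hderiv z).hasFDerivWithinAt) hbound (left_mem_segment ℝ x y)
    (right_mem_segment ℝ x y)
  rw [Real.norm_eq_abs] at key
  calc |F y - F x - ⟪g, y - x⟫| = |F y - ⟪g, y⟫ - (F x - ⟪g, x⟫)| := by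
        rw [inner_sub_right]; ring_nf
    _ ≤ L * ‖y - x‖ * ‖y - x‖ := key
    _ = L * ‖y - x‖ ^ 2 := by ring

theorem gradient_const_mul_sum {ι : Type*} (s : Finset ι) (c : ℝ) {f : ι → E → ℝ} {x : E}
    (hf : ∀ i ∈ s, DifferentiableAt ℝ (f i) x) :
    gradient (fun z => c * ∑ i ∈ s, f i z) x = c • ∑ i ∈ s, gradient (f i) x := by
  rw [gradient, fderiv_const_mul (DifferentiableAt.fun_sum hf), fderiv_fun_sum hf,
    _root_.map_smul, _root_.map_sum]
  rfl

variable {ι : Type*} [Fintype ι] {f : ι → E → ℝ} {L : ℝ}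

theorem norm_inv_card_smul_sum_gradient_sub_le [Nonempty ι]
    (hLip : ∀ i x y, ‖gradient (f i) y - gradient (f i) x‖ ≤ L * ‖y - x‖) (y z : E) :
    ‖(Fintype.card ι : ℝ)⁻¹ • ∑ i, (gradient (f i) z - gradient (f i) y)‖ ≤ L * ‖z - y‖ := by
  refine (norm_smul_sum_le _ (by positivity) _ fun i _ => hLip i y z).trans_eq ?_
  rw [sum_const, card_univ, nsmul_eq_mul, inv_mul_cancel_left₀ (by positivity)]

theorem norm_inv_card_smul_sum_gradient_sub_sq_le
    (hLip : ∀ i x y, ‖gradient (f i) y - gradient (f i) x‖ ≤ L * ‖y - x‖) (y : E) (x : ι → E) :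
    ‖(Fintype.card ι : ℝ)⁻¹ • ∑ i, (gradient (f i) y - gradient (f i) (x i))‖ ^ 2
      ≤ L ^ 2 / Fintype.card ι * ∑ i, ‖y - x i‖ ^ 2 := by
  calc _ ≤ (Fintype.card ι : ℝ)⁻¹ * ∑ i, ‖gradient (f i) y - gradient (f i) (x i)‖ ^ 2 := by
        simpa only [card_univ] using norm_inv_card_smul_sum_sq_le univ
          fun i => gradient (f i) y - gradient (f i) (x i)
    _ ≤ (Fintype.card ι : ℝ)⁻¹ * ∑ i, (L * ‖y - x i‖) ^ 2 := by
        gcongr with i; exact hLip i (x i) y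
    _ = L ^ 2 / Fintype.card ι * ∑ i, ‖y - x i‖ ^ 2 := by
        simp_rw [mul_pow, ← mul_sum]; ring

end Gradient

section Probability

variable {Ω E : Type*} [MeasurableSpace Ω] {μ : Measure Ω}
  [NormedAddCommGroup E] [InnerProductSpace ℝ E]

theorem integrable_norm_sq_of_integrable_norm_sub_integral_sq [IsFiniteMeasure μ] {S : Ω → E}
    (hS : Integrable S μ) (hvar : Integrable (fun ω => ‖S ω - ∫ ω', S ω' ∂μ‖ ^ 2) μ) :
    Integrable (fun ω => ‖S ω‖ ^ 2) μ := by
  simp_rw [norm_sq_eq_norm_sq_add_inner_add_norm_sub_sq (∫ ω', S ω' ∂μ) (S _)]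
  exact ((integrable_const _).fun_add
    (((innerSL ℝ _).integrable_comp (hS.sub (integrable_const _))).const_mul 2)).fun_add hvar

theorem integral_norm_sq_eq_norm_integral_sq_add [CompleteSpace E] [IsProbabilityMeasure μ]
    {S : Ω → E}
    (hS : Integrable S μ) (hvar : Integrable (fun ω => ‖S ω - ∫ ω', S ω' ∂μ‖ ^ 2) μ) :
    ∫ ω, ‖S ω‖ ^ 2 ∂μ = ‖∫ ω, S ω ∂μ‖ ^ 2 + ∫ ω, ‖S ω - ∫ ω', S ω' ∂μ‖ ^ 2 ∂μ := by
  have hcentered : Integrable (fun ω => S ω - ∫ ω', S ω' ∂μ) μ := hS.sub (integrable_const _)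
  have hcross : Integrable (fun ω => ⟪∫ ω', S ω' ∂μ, S ω - ∫ ω', S ω' ∂μ⟫) μ :=
    (innerSL ℝ _).integrable_comp hcentered
  simp_rw [norm_sq_eq_norm_sq_add_inner_add_norm_sub_sq (∫ ω', S ω' ∂μ) (S _)]
  rw [integral_add ((integrable_const _).fun_add (hcross.const_mul 2)) hvar,
    integral_add (integrable_const _) (hcross.const_mul 2), integral_const_mul,
    integral_inner hcentered, integral_sub hS (integrable_const _)]
  simp

theorem integral_comp_sub_smul_le [CompleteSpace E] [IsProbabilityMeasure μ] {F : E → ℝ} {L : ℝ}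
    (hF : Differentiable ℝ F) (hL : 0 ≤ L)
    (hLip : ∀ x y, ‖gradient F y - gradient F x‖ ≤ L * ‖y - x‖) (x : E) (ε : ℝ) {S : Ω → E}
    (hS : Integrable S μ) (hvar : Integrable (fun ω => ‖S ω - ∫ ω', S ω' ∂μ‖ ^ 2) μ) :
    ∫ ω, F (x - ε • S ω) ∂μ ≤ F x - ε * ⟪gradient F x, ∫ ω, S ω ∂μ⟫
      + L * ε ^ 2 * (‖∫ ω, S ω ∂μ‖ ^ 2 + ∫ ω, ‖S ω - ∫ ω', S ω' ∂μ‖ ^ 2 ∂μ) := by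
  set g := gradient F x
  have hpointwise : ∀ ω, |F (x - ε • S ω) - (F x - ε * ⟪g, S ω⟫)| ≤ L * ε ^ 2 * ‖S ω‖ ^ 2 := by
    intro ω
    have h := abs_sub_sub_inner_gradient_le hF hL hLip x (x - ε • S ω)
    rw [sub_sub_cancel_left, inner_neg_right, real_inner_smul_right, norm_neg, norm_smul,
      Real.norm_eq_abs, mul_pow, sq_abs, ← mul_assoc] at h
    convert h using 2
    ring
  have hinner : Integrable (fun ω => ⟪g, S ω⟫) μ := (innerSL ℝ g).integrable_comp hS
  have hlin : Integrable (fun ω => F x - ε * ⟪g, S ω⟫) μ :=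
    (integrable_const _).sub (hinner.const_mul ε)
  have hsq := integrable_norm_sq_of_integrable_norm_sub_integral_sq hS hvar
  have hFS : Integrable (fun ω => F (x - ε • S ω)) μ := by
    have hmeas : AEStronglyMeasurable (fun ω => F (x - ε • S ω)) μ :=
      hF.continuous.comp_aestronglyMeasurable (aestronglyMeasurable_const.sub (hS.1.const_smul ε))
    have hremainder : Integrable (fun ω => F (x - ε • S ω) - (F x - ε * ⟪g, S ω⟫)) μ :=
      (hsq.const_mul (L * ε ^ 2)).mono' (hmeas.sub hlin.1) (ae_of_all _ hpointwise)
    exact (hremainder.add hlin).congr (ae_of_all _ fun ω => sub_add_cancel _ _)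
  calc ∫ ω, F (x - ε • S ω) ∂μ
      ≤ ∫ ω, F x - ε * ⟪g, S ω⟫ + L * ε ^ 2 * ‖S ω‖ ^ 2 ∂μ :=
        integral_mono hFS (hlin.fun_add (hsq.const_mul _))
          fun ω => by linarith [(abs_le.mp (hpointwise ω)).2]
    _ = F x - ε * ⟪g, ∫ ω, S ω ∂μ⟫ + L * ε ^ 2 * ∫ ω, ‖S ω‖ ^ 2 ∂μ := by
        rw [integral_add hlin (hsq.const_mul _), integral_sub (integrable_const _)
          (hinner.const_mul ε), integral_const_mul,
          integral_const_mul, integral_inner hS]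
        simp
    _ = _ := by rw [integral_norm_sq_eq_norm_integral_sq_add hS hvar]

theorem integral_comp_sub_smul_le_of_variance_le [CompleteSpace E] [IsProbabilityMeasure μ]
    {F : E → ℝ} {L ε v : ℝ} (hF : Differentiable ℝ F) (hL : 0 ≤ L)
    (hLip : ∀ x y, ‖gradient F y - gradient F x‖ ≤ L * ‖y - x‖) (x : E) {S : Ω → E}
    (hS : Integrable S μ) (hvarint : Integrable (fun ω => ‖S ω - ∫ ω', S ω' ∂μ‖ ^ 2) μ)
    (hvar : ∫ ω, ‖S ω - ∫ ω', S ω' ∂μ‖ ^ 2 ∂μ ≤ v) (hε : 0 ≤ ε) (hLε : L * ε ≤ 1 / 4) :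
    ∫ ω, F (x - ε • S ω) ∂μ ≤ F x - ε / 4 * ‖gradient F x‖ ^ 2
      + ε / 2 * ‖gradient F x - ∫ ω, S ω ∂μ‖ ^ 2 + L * ε ^ 2 * v := by
  have hstep := integral_comp_sub_smul_le hF hL hLip x ε hS hvarint
  have hbias := neg_mul_inner_add_mul_sq_le hε hLε (gradient F x) (∫ ω, S ω ∂μ)
  have hnoise : L * ε ^ 2 * ∫ ω, ‖S ω - ∫ ω', S ω' ∂μ‖ ^ 2 ∂μ ≤ L * ε ^ 2 * v := by gcongr
  linear_combination hstep + hbias + hnoise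

theorem smul_sum_sub_integral_eq {ι : Type*} [Fintype ι] {D : ι → Ω → E} (c : ℝ)
    (hint : ∀ i, Integrable (D i) μ) (ω : Ω) :
    c • ∑ i, D i ω - ∫ ω', c • ∑ i, D i ω' ∂μ = c • ∑ i, (D i ω - ∫ ω', D i ω' ∂μ) := by
  rw [integral_smul, integral_finsetSum _ fun i _ => hint i, ← smul_sub, ← sum_sub_distrib]

end Probability

namespace ProbabilityTheory.iIndepFun

variable {Ω E ι : Type*} [MeasurableSpace Ω] {μ : Measure Ω}
  [NormedAddCommGroup E] [InnerProductSpace ℝ E] [MeasurableSpace E] [BorelSpace E]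
  {D : ι → Ω → E}

theorem sub_integral (hD : iIndepFun D μ) :
    iIndepFun (fun i ω => D i ω - ∫ ω', D i ω' ∂μ) μ :=
  hD.comp _ fun _ => measurable_id.sub_const _

theorem integrable_inner (hD : iIndepFun D μ) (hint : ∀ i, Integrable (D i) μ)
    (hsq : ∀ i, Integrable (fun ω => ‖D i ω‖ ^ 2) μ) (i j : ι) :
    Integrable (fun ω => ⟪D i ω, D j ω⟫) μ := by
  rcases eq_or_ne i j with rfl | hij
  · simpa only [real_inner_self_eq_norm_sq] using hsq i
  · exact (hD.indepFun hij).integrable_bilin (hint i) (hint j) (innerSL ℝ)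

theorem integral_inner_eq_zero [CompleteSpace E] (hD : iIndepFun D μ)
    (hint : ∀ i, Integrable (D i) μ) (hmean : ∀ i, ∫ ω, D i ω ∂μ = 0) {i j : ι} (hij : i ≠ j) :
    ∫ ω, ⟪D i ω, D j ω⟫ ∂μ = 0 := by
  refine ((hD.indepFun hij).integral_bilin (hint i) (hint j) (innerSL ℝ)).trans ?_
  simp [hmean]

variable [Fintype ι]

theorem integrable_norm_sum_sq (hD : iIndepFun D μ) (hint : ∀ i, Integrable (D i) μ)
    (hsq : ∀ i, Integrable (fun ω => ‖D i ω‖ ^ 2) μ) :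
    Integrable (fun ω => ‖∑ i, D i ω‖ ^ 2) μ := by
  simp_rw [norm_sum_sq_eq_sum_sum_inner]
  exact integrable_finsetSum _ fun i _ =>
    integrable_finsetSum _ fun j _ => hD.integrable_inner hint hsq i j

theorem integral_norm_sum_sq [CompleteSpace E] (hD : iIndepFun D μ)
    (hint : ∀ i, Integrable (D i) μ) (hmean : ∀ i, ∫ ω, D i ω ∂μ = 0)
    (hsq : ∀ i, Integrable (fun ω => ‖D i ω‖ ^ 2) μ) :
    ∫ ω, ‖∑ i, D i ω‖ ^ 2 ∂μ = ∑ i, ∫ ω, ‖D i ω‖ ^ 2 ∂μ := by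
  have hinner := hD.integrable_inner hint hsq
  simp_rw [norm_sum_sq_eq_sum_sum_inner]
  rw [integral_finsetSum _ fun i _ => integrable_finsetSum _ fun j _ => hinner i j]
  refine sum_congr rfl fun i _ => ?_
  rw [integral_finsetSum _ fun j _ => hinner i j, sum_eq_single i
    (fun j _ hji => hD.integral_inner_eq_zero hint hmean hji.symm) (by simp)]
  simp_rw [real_inner_self_eq_norm_sq]

variable [IsProbabilityMeasure μ]

theorem integrable_norm_smul_sum_sub_integral_sq (hD : iIndepFun D μ)
    (hint : ∀ i, Integrable (D i) μ)
    (hsq : ∀ i, Integrable (fun ω => ‖D i ω - ∫ ω', D i ω' ∂μ‖ ^ 2) μ) (c : ℝ) :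
    Integrable (fun ω => ‖c • ∑ i, D i ω - ∫ ω', c • ∑ i, D i ω' ∂μ‖ ^ 2) μ := by
  simp_rw [smul_sum_sub_integral_eq c hint, norm_smul, mul_pow]
  exact (hD.sub_integral.integrable_norm_sum_sq (fun i => (hint i).sub (integrable_const _))
    hsq).const_mul _

theorem integral_norm_smul_sum_sub_integral_sq_le [CompleteSpace E] (hD : iIndepFun D μ)
    (hint : ∀ i, Integrable (D i) μ)
    (hsq : ∀ i, Integrable (fun ω => ‖D i ω - ∫ ω', D i ω' ∂μ‖ ^ 2) μ) {σ : ℝ}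
    (hvar : ∀ i, ∫ ω, ‖D i ω - ∫ ω', D i ω' ∂μ‖ ^ 2 ∂μ ≤ σ ^ 2) (c : ℝ) :
    ∫ ω, ‖c • ∑ i, D i ω - ∫ ω', c • ∑ i, D i ω' ∂μ‖ ^ 2 ∂μ
      ≤ c ^ 2 * (Fintype.card ι * σ ^ 2) := by
  have hmean : ∀ i, ∫ ω, D i ω - ∫ ω', D i ω' ∂μ ∂μ = 0 := fun i => by
    rw [integral_sub (hint i) (integrable_const _)]; simp
  simp_rw [smul_sum_sub_integral_eq c hint, norm_smul, mul_pow, Real.norm_eq_abs, sq_abs]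
  rw [integral_const_mul, hD.sub_integral.integral_norm_sum_sq
    (fun i => (hint i).sub (integrable_const _)) hmean hsq]
  gcongr
  simpa using sum_le_sum fun i (_ : i ∈ univ) => hvar i

end ProbabilityTheory.iIndepFun

theorem stmt_0_general (d N : ℕ) (hN : 1 ≤ N)
    {Ω : Type*} [MeasurableSpace Ω] (μ : Measure Ω) [IsProbabilityMeasure μ]
    (L σ η : ℝ) (hL : 0 < L)
    (f : Fin N → EuclideanSpace ℝ (Fin d) → ℝ)
    (hdiff : ∀ i, Differentiable ℝ (f i))
    (hLip : ∀ i x y, ‖gradient (f i) y - gradient (f i) x‖ ≤ L * ‖y - x‖)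
    (F : EuclideanSpace ℝ (Fin d) → ℝ)
    (hF : F = fun z => (1 / (N : ℝ)) * ∑ i, f i z)
    (x : Fin N → EuclideanSpace ℝ (Fin d))
    (xbar : EuclideanSpace ℝ (Fin d))
    (G : Fin N → Ω → EuclideanSpace ℝ (Fin d))
    (hGint : ∀ i, Integrable (G i) μ)
    (hindep : ProbabilityTheory.iIndepFun G μ)
    (hmean : ∀ i, ∫ ω, G i ω ∂μ = gradient (f i) (x i))
    (hvarint : ∀ i, Integrable (fun ω => ‖G i ω - gradient (f i) (x i)‖ ^ 2) μ)
    (hvar : ∀ i, ∫ ω, ‖G i ω - gradient (f i) (x i)‖ ^ 2 ∂μ ≤ σ ^ 2)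
    (τ : ℕ) (hη : 0 < η) (hητ : η ≤ 1 / (4 * L * τ))
    (xplus : Ω → EuclideanSpace ℝ (Fin d))
    (hxplus : ∀ ω, xplus ω = xbar - ((η * τ) / (N : ℝ)) • ∑ i, G i ω) :
    ∫ ω, F (xplus ω) ∂μ ≤
      F xbar - (η * τ / 4) * ‖gradient F xbar‖ ^ 2
        + (η * L ^ 2 * τ / (N : ℝ)) * ∑ i, ‖xbar - x i‖ ^ 2
        + σ ^ 2 * η ^ 2 * τ ^ 2 * L / (N : ℝ) := by
  have : Nonempty (Fin N) := ⟨⟨0, hN⟩⟩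
  have hdiffF : Differentiable ℝ F := by rw [hF]; fun_prop
  have hgradF : ∀ z, gradient F z = (1 / (N : ℝ)) • ∑ i, gradient (f i) z := fun z => by
    rw [hF]; exact gradient_const_mul_sum _ _ fun i _ => (hdiff i).differentiableAt
  have hLipF : ∀ y z, ‖gradient F z - gradient F y‖ ≤ L * ‖z - y‖ := fun y z => by
    simpa [hgradF, ← smul_sub] using norm_inv_card_smul_sum_gradient_sub_le hLip y z
  have hgap : ‖gradient F xbar - (1 / (N : ℝ)) • ∑ i, gradient (f i) (x i)‖ ^ 2
      ≤ L ^ 2 / N * ∑ i, ‖xbar - x i‖ ^ 2 := by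
    simpa [hgradF, ← smul_sub] using norm_inv_card_smul_sum_gradient_sub_sq_le hLip xbar x
  have hmeanS : ∫ ω, (1 / (N : ℝ)) • ∑ i, G i ω ∂μ
      = (1 / (N : ℝ)) • ∑ i, gradient (f i) (x i) := by
    rw [integral_smul, integral_finsetSum _ fun i _ => hGint i]
    simp_rw [hmean]
  have hLε : L * (η * τ) ≤ 1 / 4 := by
    linarith [mul_le_of_le_div₀ zero_le_one (by positivity) hητ]
  have hxplus' : ∀ ω, xplus ω = xbar - (η * τ) • (1 / (N : ℝ)) • ∑ i, G i ω := fun ω => by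
    rw [hxplus, smul_smul, mul_one_div]
  simp_rw [← hmean] at hvarint hvar
  have hstep := integral_comp_sub_smul_le_of_variance_le hdiffF hL.le hLipF xbar
    ((integrable_finsetSum _ fun i _ => hGint i).smul (1 / (N : ℝ)))
    (hindep.integrable_norm_smul_sum_sub_integral_sq hGint hvarint (1 / N))
    (hindep.integral_norm_smul_sum_sub_integral_sq_le hGint hvarint hvar (1 / N))
    (by positivity) hLε
  simp only [Pi.smul_apply, hmeanS, Fintype.card_fin] at hstep
  have hnoise : (1 / (N : ℝ)) ^ 2 * (N * σ ^ 2) = σ ^ 2 / N := by field_simp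
  have hgap' := mul_le_mul_of_nonneg_left hgap (by positivity : (0 : ℝ) ≤ η * τ / 2)
  have hK : 0 ≤ η * τ / 2 * (L ^ 2 / N * ∑ i, ‖xbar - x i‖ ^ 2) := by positivity
  simp_rw [hxplus']
  linear_combination hstep + hgap' + hK + L * (η * τ) ^ 2 * hnoise

/-- **Lemma 1** (per-round descent inequality for decentralized SGD). -/
theorem stmt_0 (d N : ℕ) (hN : 1 ≤ N)
    {Ω : Type*} [MeasurableSpace Ω] (μ : Measure Ω) [IsProbabilityMeasure μ]
    (L σ η : ℝ) (hL : 0 < L) (hσ : 0 ≤ σ)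
    (f : Fin N → EuclideanSpace ℝ (Fin d) → ℝ)
    (hdiff : ∀ i, Differentiable ℝ (f i))
    (hLip : ∀ i x y, ‖gradient (f i) y - gradient (f i) x‖ ≤ L * ‖y - x‖)
    (F : EuclideanSpace ℝ (Fin d) → ℝ)
    (hF : F = fun z => (1 / (N : ℝ)) * ∑ i, f i z)
    (x : Fin N → EuclideanSpace ℝ (Fin d))
    (xbar : EuclideanSpace ℝ (Fin d))
    (hxbar : xbar = (1 / (N : ℝ)) • ∑ i, x i)
    (G : Fin N → Ω → EuclideanSpace ℝ (Fin d))
    (hGint : ∀ i, Integrable (G i) μ)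
    (hindep : ProbabilityTheory.iIndepFun G μ)
    (hmean : ∀ i, ∫ ω, G i ω ∂μ = gradient (f i) (x i))
    (hvarint : ∀ i, Integrable (fun ω => ‖G i ω - gradient (f i) (x i)‖ ^ 2) μ)
    (hvar : ∀ i, ∫ ω, ‖G i ω - gradient (f i) (x i)‖ ^ 2 ∂μ ≤ σ ^ 2)
    (τ : ℕ) (hτ : 1 ≤ τ) (hη : 0 < η) (hητ : η ≤ 1 / (4 * L * τ))
    (xplus : Ω → EuclideanSpace ℝ (Fin d))
    (hxplus : ∀ ω, xplus ω = xbar - ((η * τ) / (N : ℝ)) • ∑ i, G i ω) :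
    ∫ ω, F (xplus ω) ∂μ ≤
      F xbar - (η * τ / 4) * ‖gradient F xbar‖ ^ 2
        + (η * L ^ 2 * τ / (N : ℝ)) * ∑ i, ‖xbar - x i‖ ^ 2
        + σ ^ 2 * η ^ 2 * τ ^ 2 * L / (N : ℝ) :=
  stmt_0_general d N hN μ L σ η hL f hdiff hLip F hF x xbar G hGint hindep hmean hvarint hvar τ hη
    hητ xplus hxplus
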